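/- Let E be a finite set with |E| = m, and let P be a self-dual predicate on pairs (A, e) with e ∈ A ⊆ E, i.e., for every A ⊆ E and every e ∈ A, P(A, e) holds if and only if P((E \ A) ∪ {e}, e) fails. Then for every natural number a with 0 ≤ a ≤ m, Σ_{A ⊆ E, |A| = a} #{e ∈ A : P(A, e)} = Σ_{B ⊆ E, |B| = m+1−a} #{e ∈ B : ¬P(B, e)}. -/

import Mathlib

/-! The map `(A, e) ↦ ((E \ A) ∪ {e}, e)` is an involution on the pairs `e ∈ A ⊆ E`; it turns
`|A| = a` into `|(E \ A) ∪ {e}| = m + 1 - a`, and self-duality turns `P` into `¬ P`. Both sides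
count the pairs `(A, e)` of the respective strata, so the involution matches them bijectively. -/

namespace Finset

variable {α : Type*} [DecidableEq α] {E A : Finset α} {e : α}

theorem sdiff_union_singleton_subset (he : e ∈ E) : (E \ A) ∪ {e} ⊆ E :=
  union_subset sdiff_subset (singleton_subset_iff.2 he)

theorem card_sdiff_union_singleton_add_card (hA : A ⊆ E) (he : e ∈ A) :
    ((E \ A) ∪ {e}).card + A.card = E.card + 1 := by
  rw [card_union_of_disjoint (disjoint_singleton_right.2 fun h => (mem_sdiff.1 h).2 he),
    card_sdiff_of_subset hA, card_singleton]
  have := card_le_card hA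
  omega

theorem sdiff_union_singleton_sdiff_union_singleton (hA : A ⊆ E) (he : e ∈ A) :
    (E \ ((E \ A) ∪ {e})) ∪ {e} = A := by
  ext x
  by_cases hx : x = e
  · simp [hx, he]
  · simp only [mem_union, mem_sdiff, mem_singleton, hx, or_false, not_and, not_not]
    exact ⟨fun h => h.2 h.1, fun h => ⟨hA h, fun _ => h⟩⟩

end Finset

open Finset

theorem stratified_selfdual_sum_identity_general {α : Type*} [DecidableEq α]
    (E : Finset α) (m : ℕ) (hE : E.card = m)
    (P : Finset α → α → Prop) [∀ A e, Decidable (P A e)]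
    (hP : ∀ A ⊆ E, ∀ e ∈ A, (P A e ↔ ¬ P ((E \ A) ∪ {e}) e))
    (a : ℕ) :
    ∑ A ∈ E.powerset.filter (fun A => A.card = a),
        (A.filter fun e => P A e).card =
      ∑ B ∈ E.powerset.filter (fun B => B.card = m + 1 - a),
        (B.filter fun e => ¬ P B e).card := by
  subst hE
  rw [← card_sigma, ← card_sigma]
  refine card_nbij' (fun p => ⟨(E \ p.1) ∪ {p.2}, p.2⟩) (fun p => ⟨(E \ p.1) ∪ {p.2}, p.2⟩)
    ?_ ?_ ?_ ?_ <;> rintro ⟨A, e⟩ h <;>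
    simp only [coe_sigma, Set.mem_sigma_iff, coe_filter, mem_powerset, Set.mem_ofPred_eq]
      at h ⊢ <;> obtain ⟨⟨hAE, hA⟩, heA, hPA⟩ := h
  · have := card_sdiff_union_singleton_add_card hAE heA
    have := card_le_card hAE
    exact ⟨⟨sdiff_union_singleton_subset (hAE heA), by omega⟩, by simp, (hP A hAE e heA).1 hPA⟩
  · have := card_sdiff_union_singleton_add_card hAE heA
    have := card_pos.2 ⟨e, heA⟩
    have hB := sdiff_union_singleton_subset (A := A) (hAE heA)
    refine ⟨⟨hB, by omega⟩, by simp, ?_⟩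
    rwa [hP _ hB e (by simp), sdiff_union_singleton_sdiff_union_singleton hAE heA]
  all_goals rw [sdiff_union_singleton_sdiff_union_singleton hAE heA]

/-- Stratified sum identity (Eq. (7) of the paper): if `E` is a finite set with
`|E| = m` and `P` is a self-dual predicate on pairs `(A, e)` with `e ∈ A ⊆ E`
(i.e. for all `A ⊆ E` and `e ∈ A`, `P A e` holds iff `P ((E \ A) ∪ {e}) e` fails),
then for every `a ≤ m`,
`Σ_{A ⊆ E, |A| = a} #{e ∈ A : P(A,e)} = Σ_{B ⊆ E, |B| = m+1-a} #{e ∈ B : ¬P(B,e)}`. -/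
theorem stratified_selfdual_sum_identity {α : Type*} [DecidableEq α]
    (E : Finset α) (m : ℕ) (hE : E.card = m)
    (P : Finset α → α → Prop) [∀ A e, Decidable (P A e)]
    (hP : ∀ A ⊆ E, ∀ e ∈ A, (P A e ↔ ¬ P ((E \ A) ∪ {e}) e))
    (a : ℕ) (ha : a ≤ m) :
    ∑ A ∈ E.powerset.filter (fun A => A.card = a),
        (A.filter fun e => P A e).card =
      ∑ B ∈ E.powerset.filter (fun B => B.card = m + 1 - a),
        (B.filter fun e => ¬ P B e).card :=
  stratified_selfdual_sum_identity_general E m hE P hP a
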